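/- Fix d ≥ 1 and k ≥ 1 with k(d−1) ≥ 2, and set N = C(d+k,d). Let a(x) be any monomial of total degree k+1 in d variables, and let A = P_k ⊕ span(a) where P_k is the space of polynomials of degree ≤ k. Then A is not perfect with respect to the complete generalised Wronskian W_d^k: the span of all values W_d^k(a₁,...,a_N) with a_j ∈ A is a proper subspace of A. Specifically, there exists a coordinate x^i such that the monomial (x^i)^k is not in the span of the image of the bracket. -/

import Mathlib

open MvPolynomial

/-- Iterated partial derivative `∂^{|r|}/∂x^r` along a multi-index `r : Fin d → ℕ`. -/
noncomputable def wDeriv (d : ℕ) (r : Fin d → ℕ)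
    (p : MvPolynomial (Fin d) ℚ) : MvPolynomial (Fin d) ℚ :=
  (List.finRange d).foldl (fun q i => (⇑(pderiv i))^[r i] q) p

namespace Stmt18Aux

variable {d : ℕ}

abbrev P (d : ℕ) := MvPolynomial (Fin d) ℚ

lemma iter_pderiv_monomial (i : Fin d) (t : ℕ) (m : Fin d →₀ ℕ) (c : ℚ) :
    (⇑(pderiv i))^[t] (monomial m c) =
      monomial (m - Finsupp.single i t) (c * ((m i).descFactorial t : ℚ)) := by
  induction t with
  | zero => simp
  | succ t ih =>
    rw [Function.iterate_succ_apply', ih, pderiv_monomial]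
    have he : m - Finsupp.single i t - Finsupp.single i 1 = m - Finsupp.single i (t + 1) := by
      rw [tsub_tsub, ← Finsupp.single_add]
    have hc : (m - Finsupp.single i t) i = m i - t := by
      rw [Finsupp.tsub_apply, Finsupp.single_eq_same]
    rw [he, hc, Nat.descFactorial_succ]
    rw [Nat.cast_mul]
    ring_nf


lemma foldl_wDeriv_monomial (r : Fin d → ℕ) (L : List (Fin d)) (hL : L.Nodup)
    (m : Fin d →₀ ℕ) (c : ℚ) :
    L.foldl (fun q i => (⇑(pderiv i))^[r i] q) (monomial m c)
      = monomial (m - (L.map fun i => Finsupp.single i (r i)).sum)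
          (c * ((L.map fun i => ((m i).descFactorial (r i) : ℚ)).prod)) := by
  induction L generalizing m c with
  | nil => simp
  | cons i L ih =>
    obtain ⟨hi, hL'⟩ := List.nodup_cons.mp hL
    rw [List.foldl_cons, iter_pderiv_monomial, ih hL']
    have hmap : (L.map fun j => (((m - Finsupp.single i (r i)) j).descFactorial (r j) : ℚ))
        = L.map fun j => ((m j).descFactorial (r j) : ℚ) := by
      refine List.map_congr_left fun j hj => ?_
      have hji : j ≠ i := fun h => hi (h ▸ hj)
      rw [Finsupp.tsub_apply, Finsupp.single_eq_of_ne' hji.symm, Nat.sub_zero]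
    rw [hmap]
    congr 1
    · rw [List.map_cons, List.sum_cons, tsub_tsub]
    · rw [List.map_cons, List.prod_cons]; ring

lemma wDeriv_monomial (r : Fin d → ℕ) (m : Fin d →₀ ℕ) (c : ℚ) :
    wDeriv d r (monomial m c)
      = monomial (m - Finsupp.equivFunOnFinite.symm r)
          (c * ∏ i, ((m i).descFactorial (r i) : ℚ)) := by
  have hsum : ((List.finRange d).map fun i => Finsupp.single i (r i)).sum
      = Finsupp.equivFunOnFinite.symm r := by
    rw [← Fin.sum_univ_def]
    ext j
    rw [Finsupp.finset_sum_apply,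
      Finset.sum_eq_single j (fun i _ hij => Finsupp.single_eq_of_ne' hij) (by simp)]
    simp
  rw [wDeriv, foldl_wDeriv_monomial r _ (List.nodup_finRange d), hsum, ← Fin.prod_univ_def]

noncomputable def wDerivL (d : ℕ) (r : Fin d → ℕ) : P d →ₗ[ℚ] P d :=
  (List.finRange d).foldl (fun f i => ((pderiv i : Derivation ℚ (P d) (P d)).toLinearMap ^ (r i)) ∘ₗ f)
    LinearMap.id

lemma foldl_wDerivL_apply (r : Fin d → ℕ) (L : List (Fin d)) (f : P d →ₗ[ℚ] P d) (p : P d) :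
    (L.foldl (fun f i => ((pderiv i : Derivation ℚ (P d) (P d)).toLinearMap ^ (r i)) ∘ₗ f) f) p
      = L.foldl (fun q i => (⇑(pderiv i))^[r i] q) (f p) := by
  induction L generalizing f with
  | nil => rfl
  | cons i L ih =>
    rw [List.foldl_cons, List.foldl_cons, ih]
    congr 1
    rw [LinearMap.comp_apply, Module.End.pow_apply]
    rfl

lemma wDeriv_eq_L (r : Fin d → ℕ) (p : P d) : wDeriv d r p = wDerivL d r p := by
  rw [wDerivL, foldl_wDerivL_apply, wDeriv]
  rfl


variable {N : ℕ}

noncomputable def F (d : ℕ) (N : ℕ) (r : Fin N → Fin d → ℕ) :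
    MultilinearMap ℚ (fun _ : Fin N => P d) (P d) :=
  ((Matrix.detRowAlternating :
      (Fin N → P d) [⋀^Fin N]→ₗ[P d] (P d)).toMultilinearMap.restrictScalars ℚ).compLinearMap
    (fun _ => LinearMap.pi fun j => wDerivL d (r j))

lemma F_apply (r : Fin N → Fin d → ℕ) (a : Fin N → P d) :
    F d N r a = Matrix.det (Matrix.of fun j n : Fin N => wDeriv d (r j) (a n)) := by
  rw [← Matrix.det_transpose]
  have : F d N r a
      = Matrix.detRowAlternating (Matrix.of fun n j : Fin N => wDerivL d (r j) (a n)) := rfl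
  rw [this]
  rw [Matrix.detRowAlternating]
  congr 1
  ext n j
  simp [Matrix.transpose_apply, wDeriv_eq_L]

lemma multilinear_mem (f : MultilinearMap ℚ (fun _ : Fin N => P d) (P d))
    (s : Set (P d)) (Q : Submodule ℚ (P d))
    (h : ∀ g : Fin N → P d, (∀ n, g n ∈ s) → f g ∈ Q)
    (a : Fin N → P d) (ha : ∀ n, a n ∈ Submodule.span ℚ s) : f a ∈ Q := by
  choose c hsupp hsum using fun n => Submodule.mem_span_set.mp (ha n)
  have haeq : a = fun n => ∑ x ∈ (c n).support, c n x • x := by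
    funext n; rw [← hsum n]; rfl
  rw [haeq, f.map_sum_finset (A := fun n => (c n).support) (g := fun n x => c n x • x)]
  refine Submodule.sum_mem _ fun p hp => ?_
  rw [f.map_smul_univ]
  exact Submodule.smul_mem _ _ (h _ fun n => hsupp n (Fintype.mem_piFinset.mp hp n))

lemma monomial_prod {α : Type*} (s : Finset α) (e : α → (Fin d →₀ ℕ)) (q : α → ℚ) :
    ∏ x ∈ s, (monomial (e x) (q x) : P d) = monomial (∑ x ∈ s, e x) (∏ x ∈ s, q x) := by
  classical
  induction s using Finset.cons_induction with
  | empty => simp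
  | cons x s hx ih =>
    rw [Finset.prod_cons, Finset.prod_cons, Finset.sum_cons, ih, monomial_mul]

end Stmt18Aux


open Stmt18Aux

/-- **monomial imperfection.** Let `d ≥ 1`, `k ≥ 1` with
`k(d−1) ≥ 2`, `N = C(d+k,d)`, with `r : Fin N → ℕ^d` enumerating all multi-indices
of total degree ≤ k.  Let `a(x) = x^n` be a monomial of total degree `k+1` and
`A = P_k ⊕ span(a)`.  Then the span of the image of the complete generalised
Wronskian bracket on `A` is a proper subspace of `A`; specifically, some monomial
`(x^i)^k` does not lie in that span. -/
theorem stmt18 (d k : ℕ) (hd : 1 ≤ d) (hk : 1 ≤ k) (h2 : 2 ≤ k * (d - 1))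
    (N : ℕ) (hN : N = Nat.choose (d + k) d)
    (r : Fin N → Fin d → ℕ) (hinj : Function.Injective r)
    (hcomp : ∀ v : Fin d → ℕ, (∑ i, v i) ≤ k ↔ ∃ j, r j = v)
    (nn : Fin d → ℕ) (hdeg : (∑ i, nn i) = k + 1)
    (A : Submodule ℚ (MvPolynomial (Fin d) ℚ))
    (hA : A = restrictTotalDegree (Fin d) ℚ k ⊔
        Submodule.span ℚ {∏ i, X i ^ nn i})
    (I : Submodule ℚ (MvPolynomial (Fin d) ℚ))
    (hI : I = Submodule.span ℚ {w : MvPolynomial (Fin d) ℚ |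
        ∃ a : Fin N → MvPolynomial (Fin d) ℚ, (∀ n, a n ∈ A) ∧
          w = Matrix.det (Matrix.of fun j n : Fin N => wDeriv d (r j) (a n))}) :
    I < A ∧ ∃ i : Fin d, (X i : MvPolynomial (Fin d) ℚ) ^ k ∉ I := by
  classical
  -- choose a coordinate i0 with nn i0 < k
  obtain ⟨i0, hi0⟩ : ∃ i : Fin d, nn i < k := by
    by_contra hcon
    push_neg at hcon
    have h1 : d * k ≤ ∑ i, nn i := by
      calc d * k = ∑ _i : Fin d, k := by
            rw [Finset.sum_const, Finset.card_univ, Fintype.card_fin, smul_eq_mul]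
        _ ≤ ∑ i, nn i := Finset.sum_le_sum fun i _ => hcon i
    rw [hdeg] at h1
    have h3 : k * d = k * (d - 1) + k := by
      have hd1 : d - 1 + 1 = d := Nat.succ_pred_eq_of_pos hd
      calc k * d = k * (d - 1 + 1) := by rw [hd1]
        _ = k * (d - 1) + k := by ring
    have h4 : d * k = k * d := Nat.mul_comm d k
    omega
  -- basic finsupp versions
  set nnF : Fin d →₀ ℕ := Finsupp.equivFunOnFinite.symm nn with hnnF
  set Rj : Fin N → (Fin d →₀ ℕ) := fun j => Finsupp.equivFunOnFinite.symm (r j) with hRjdef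
  have hcoe : ∀ f : Fin d → ℕ, ⇑(Finsupp.equivFunOnFinite.symm f) = f := fun f => rfl
  have hRinj : Function.Injective Rj :=
    fun a b h => hinj (Finsupp.equivFunOnFinite.symm.injective.eq_iff.mp h)
  have hmemS : ∀ v : Fin d →₀ ℕ, ((∑ i, v i) ≤ k ↔ ∃ j, Rj j = v) := by
    intro v
    rw [hcomp ⇑v]
    constructor
    · rintro ⟨j, hj⟩
      refine ⟨j, ?_⟩
      rw [hRjdef]
      simp only [hj]
      exact Finsupp.equivFunOnFinite_symm_coe v
    · rintro ⟨j, hj⟩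
      exact ⟨j, by rw [← hj, hRjdef, hcoe]⟩
  set Sset : Finset (Fin d →₀ ℕ) := Finset.image Rj Finset.univ with hSsetdef
  have hcardS : Sset.card = N := by
    rw [hSsetdef, Finset.card_image_of_injective _ hRinj, Finset.card_univ, Fintype.card_fin]
  have hmem' : ∀ v, v ∈ Sset ↔ (∑ i, v i) ≤ k := by
    intro v
    rw [hSsetdef, Finset.mem_image, hmemS v]
    simp
  have hsumnn : (∑ i, nnF i) = k + 1 := by rw [hnnF]; simp only [hcoe]; exact hdeg
  have hnnS : nnF ∉ Sset := fun h => by have := (hmem' nnF).mp h; omega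
  -- the generating set of A
  set genSet : Set (MvPolynomial (Fin d) ℚ) :=
    {p | ∃ m : Fin d →₀ ℕ, p = monomial m 1 ∧ ((∑ i, m i) ≤ k ∨ m = nnF)} with hgenSet
  have hprodnn : (∏ i, X i ^ nn i : MvPolynomial (Fin d) ℚ) = monomial nnF 1 := by
    rw [← prod_X_pow_eq_monomial]
    rw [Finset.prod_subset (Finset.subset_univ nnF.support)
      (fun x _ hx => by rw [Finsupp.notMem_support_iff.mp hx, pow_zero])]
    exact Finset.prod_congr rfl fun i _ => by rw [hnnF, hcoe]
  have hAspan : A ≤ Submodule.span ℚ genSet := by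
    rw [hA, sup_le_iff]
    constructor
    · intro p hp
      rw [mem_restrictTotalDegree] at hp
      nth_rewrite 1 [p.as_sum]
      refine Submodule.sum_mem _ fun v hv => ?_
      have h1 : (monomial v (coeff v p) : MvPolynomial (Fin d) ℚ)
          = coeff v p • monomial v 1 := by rw [smul_monomial, smul_eq_mul, mul_one]
      rw [h1]
      refine Submodule.smul_mem _ _ (Submodule.subset_span ⟨v, rfl, Or.inl ?_⟩)
      have h2 : (v.sum fun _ e => e) = ∑ i, v i := Finsupp.sum_fintype _ _ fun _ => rfl
      have h3 := le_totalDegree hv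
      omega
    · refine Submodule.span_le.mpr ?_
      intro x hx
      rw [Set.mem_singleton_iff] at hx
      subst hx
      exact Submodule.subset_span ⟨nnF, hprodnn, Or.inr rfl⟩
  -- the target monomial and submodule Q
  set μ : Fin d →₀ ℕ := Finsupp.single i0 k with hμ
  have hμi0 : μ i0 = k := Finsupp.single_eq_same
  have hμsum : (μ.sum fun _ e => e) = k := by rw [hμ]; exact Finsupp.sum_single_index rfl
  set Q : Submodule ℚ (MvPolynomial (Fin d) ℚ) := A ⊓ LinearMap.ker (lcoeff ℚ μ) with hQ
  -- membership helper
  have hQmem : ∀ (E : Fin d →₀ ℕ) (C : ℚ), ((∑ i, E i) ≤ k ∨ E = nnF) → E ≠ μ →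
      (monomial E C : MvPolynomial (Fin d) ℚ) ∈ Q := by
    intro E C hE hEμ
    rw [hQ, Submodule.mem_inf]
    constructor
    · rcases hE with hE | hE
      · rw [hA]
        refine Submodule.mem_sup_left ?_
        rw [mem_restrictTotalDegree]
        refine (totalDegree_monomial_le _ _).trans ?_
        have h2 : (E.sum fun _ => id) = ∑ i, E i := Finsupp.sum_fintype _ _ fun _ => rfl
        rw [h2]
        exact hE
      · subst hE
        rw [hA]
        refine Submodule.mem_sup_right ?_
        have h1 : (monomial nnF C : MvPolynomial (Fin d) ℚ)
            = C • (∏ i, X i ^ nn i) := by rw [hprodnn, smul_monomial, smul_eq_mul, mul_one]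
        rw [h1]
        exact Submodule.smul_mem _ _ (Submodule.subset_span rfl)
    · rw [LinearMap.mem_ker, lcoeff_apply, coeff_monomial, if_neg hEμ]
  have hNpos : 0 < N := by
    obtain ⟨j, -⟩ := (hcomp fun _ => 0).mp (by simp)
    exact j.pos
  -- the key generator lemma
  have hgen : ∀ g : Fin N → MvPolynomial (Fin d) ℚ,
      (∀ n, g n ∈ genSet) → F d N r g ∈ Q := by
    intro g hg
    choose m hm1 hm2 using hg
    have hgeq : g = fun n => monomial (m n) 1 := funext hm1
    rw [hgeq, F_apply]
    by_cases hminj : Function.Injective m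
    swap
    · rw [Function.Injective] at hminj
      push_neg at hminj
      obtain ⟨n1, n2, hmeq, hne⟩ := hminj
      rw [Matrix.det_zero_of_column_eq hne (fun j => by simp only [Matrix.of_apply, hmeq])]
      exact Q.zero_mem
    -- expand the determinant
    have hdet : Matrix.det (Matrix.of fun j n : Fin N => wDeriv d (r j) (monomial (m n) 1))
        = ∑ σ : Equiv.Perm (Fin N),
            monomial (∑ n, (m n - Rj (σ n)))
              (((Equiv.Perm.sign σ : ℤ) : ℚ) *
                ∏ n, ∏ i, ((m n i).descFactorial (r (σ n) i) : ℚ)) := by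
      rw [Matrix.det_apply']
      refine Finset.sum_congr rfl fun σ _ => ?_
      have hrow : ∀ n, (Matrix.of fun j n : Fin N => wDeriv d (r j) (monomial (m n) 1)) (σ n) n
          = monomial (m n - Rj (σ n)) (∏ i, ((m n i).descFactorial (r (σ n) i) : ℚ)) := by
        intro n
        rw [Matrix.of_apply, wDeriv_monomial, one_mul, hRjdef]
      rw [Finset.prod_congr rfl (fun n _ => hrow n), monomial_prod]
      rw [show ((Equiv.Perm.sign σ : ℤ) : MvPolynomial (Fin d) ℚ)
            = C (((Equiv.Perm.sign σ : ℤ) : ℚ)) from (map_intCast (C : ℚ →+* MvPolynomial (Fin d) ℚ) _).symm, C_mul_monomial]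
    rw [hdet]
    -- common facts per permutation
    have hCle : ∀ (σ : Equiv.Perm (Fin N)),
        (((Equiv.Perm.sign σ : ℤ) : ℚ) *
          ∏ n, ∏ i, ((m n i).descFactorial (r (σ n) i) : ℚ)) ≠ 0 →
        ∀ n, Rj (σ n) ≤ m n := by
      intro σ hC n
      have h1 : (∏ n, ∏ i, ((m n i).descFactorial (r (σ n) i) : ℚ)) ≠ 0 :=
        fun h0 => hC (by rw [h0, mul_zero])
      have h2 := Finset.prod_ne_zero_iff.mp h1 n (Finset.mem_univ n)
      rw [Finsupp.le_def]
      intro i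
      have h3 := Finset.prod_ne_zero_iff.mp h2 i (Finset.mem_univ i)
      have h4 : (m n i).descFactorial (r (σ n) i) ≠ 0 := fun h => h3 (by rw [h]; simp)
      have h5 := Nat.descFactorial_eq_zero_iff_lt.not.mp h4
      rw [hRjdef, hcoe]
      omega
    have hexact : ∀ σ : Equiv.Perm (Fin N), (∀ n, Rj (σ n) ≤ m n) →
        (∑ n, (m n - Rj (σ n))) + ∑ j, Rj j = ∑ n, m n := by
      intro σ hle
      have h1 : ∑ n, Rj (σ n) = ∑ j, Rj j := Equiv.sum_comp σ Rj
      rw [← h1, ← Finset.sum_add_distrib]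
      exact Finset.sum_congr rfl fun n _ => tsub_add_cancel_of_le (hle n)
    -- case split : does some column equal the special monomial?
    by_cases hhit : ∃ n0, m n0 = nnF
    · -- case B
      obtain ⟨n0, hn0⟩ := hhit
      have hmS : ∀ n, n ≠ n0 → m n ∈ Sset := fun n hn =>
        (hmem' _).mpr ((hm2 n).resolve_right fun h => hn (hminj (h.trans hn0.symm)))
      set imgE := Finset.image m (Finset.univ.erase n0) with himgE
      have hsub : imgE ⊆ Sset := fun v hv => by
        obtain ⟨n, hn, rfl⟩ := Finset.mem_image.mp hv
        exact hmS n (Finset.ne_of_mem_erase hn)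
      have hcardE : imgE.card = N - 1 := by
        rw [himgE, Finset.card_image_of_injective _ hminj,
          Finset.card_erase_of_mem (Finset.mem_univ n0), Finset.card_univ, Fintype.card_fin]
      have hcd : (Sset \ imgE).card = 1 := by
        rw [Finset.card_sdiff_of_subset hsub, hcardE, hcardS]; omega
      obtain ⟨mstar, hmstar⟩ := Finset.card_eq_one.mp hcd
      have hsumB : (∑ n, m n) + mstar = (∑ j, Rj j) + nnF := by
        have h1 : ∑ v ∈ Sset \ imgE, v + ∑ v ∈ imgE, v = ∑ v ∈ Sset, v :=
          Finset.sum_sdiff hsub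
        rw [hmstar, Finset.sum_singleton] at h1
        have h2 : ∑ v ∈ imgE, (v : Fin d →₀ ℕ) = ∑ n ∈ Finset.univ.erase n0, m n :=
          Finset.sum_image fun a _ b _ h => hminj h
        have h3 : ∑ v ∈ Sset, (v : Fin d →₀ ℕ) = ∑ j, Rj j :=
          Finset.sum_image fun a _ b _ h => hRinj h
        have h4 : (∑ n, m n) = m n0 + ∑ n ∈ Finset.univ.erase n0, m n :=
          (Finset.add_sum_erase _ _ (Finset.mem_univ n0)).symm
        rw [h4, hn0, ← h2, ← h3, ← h1]
        abel
      refine Submodule.sum_mem _ fun σ _ => ?_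
      by_cases hC : (((Equiv.Perm.sign σ : ℤ) : ℚ) *
          ∏ n, ∏ i, ((m n i).descFactorial (r (σ n) i) : ℚ)) = 0
      · rw [hC, monomial_zero]; exact Q.zero_mem
      have hle := hCle σ hC
      have hEeq := hexact σ hle
      have hE : (∑ n, (m n - Rj (σ n))) + mstar = nnF := by
        ext i
        have ha := congrArg (fun f : Fin d →₀ ℕ => f i) hEeq
        have hb := congrArg (fun f : Fin d →₀ ℕ => f i) hsumB
        simp only [Finsupp.add_apply] at ha hb ⊢
        omega
      have hEμ : (∑ n, (m n - Rj (σ n))) ≠ μ := by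
        intro h
        have := congrArg (fun f : Fin d →₀ ℕ => f i0) hE
        simp only [h, Finsupp.add_apply, hμi0] at this
        have hnn : nnF i0 = nn i0 := by rw [hnnF, hcoe]
        omega
      by_cases hms : mstar = 0
      · refine hQmem _ _ (Or.inr ?_) hEμ
        rw [hms, add_zero] at hE
        exact hE
      · refine hQmem _ _ (Or.inl ?_) hEμ
        have h5 : (∑ i, ((∑ n, (m n - Rj (σ n))) + mstar) i) = ∑ i, nnF i := by rw [hE]
        simp only [Finsupp.add_apply, Finset.sum_add_distrib] at h5
        have h6 : (∑ i, mstar i) ≠ 0 := by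
          intro h0
          apply hms
          ext i
          exact Finset.sum_eq_zero_iff.mp h0 i (Finset.mem_univ i)
        omega
    · -- case A
      push_neg at hhit
      have hmS : ∀ n, m n ∈ Sset := fun n => (hmem' _).mpr ((hm2 n).resolve_right (hhit n))
      have himg : Finset.image m Finset.univ = Sset := by
        refine Finset.eq_of_subset_of_card_le ?_ ?_
        · intro v hv
          obtain ⟨n, _, rfl⟩ := Finset.mem_image.mp hv
          exact hmS n
        · rw [hcardS, Finset.card_image_of_injective _ hminj, Finset.card_univ,
            Fintype.card_fin]
      have hsumA : (∑ n, m n) = ∑ j, Rj j := by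
        have h2 : ∑ v ∈ Finset.image m Finset.univ, (v : Fin d →₀ ℕ) = ∑ n, m n :=
          Finset.sum_image fun a _ b _ h => hminj h
        have h3 : ∑ v ∈ Sset, (v : Fin d →₀ ℕ) = ∑ j, Rj j :=
          Finset.sum_image fun a _ b _ h => hRinj h
        rw [← h2, himg, h3]
      refine Submodule.sum_mem _ fun σ _ => ?_
      by_cases hC : (((Equiv.Perm.sign σ : ℤ) : ℚ) *
          ∏ n, ∏ i, ((m n i).descFactorial (r (σ n) i) : ℚ)) = 0
      · rw [hC, monomial_zero]; exact Q.zero_mem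
      have hle := hCle σ hC
      have hEeq := hexact σ hle
      have hE0 : (∑ n, (m n - Rj (σ n))) = 0 := by
        rw [hsumA] at hEeq
        ext i
        have ha := congrArg (fun f : Fin d →₀ ℕ => f i) hEeq
        simp only [Finsupp.add_apply] at ha ⊢
        simp only [Finsupp.coe_zero, Pi.zero_apply]
        omega
      rw [hE0]
      refine hQmem _ _ (Or.inl (by simp)) ?_
      intro h
      have := congrArg (fun f : Fin d →₀ ℕ => f i0) h
      simp only [Finsupp.coe_zero, Pi.zero_apply, hμi0] at this
      omega
  -- I ≤ Q
  have hIQ : I ≤ Q := by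
    rw [hI]
    refine Submodule.span_le.mpr ?_
    rintro w ⟨a, ha, rfl⟩
    rw [← F_apply]
    exact multilinear_mem _ genSet Q hgen a fun n => hAspan (ha n)
  have hXA : (X i0 : MvPolynomial (Fin d) ℚ) ^ k ∈ A := by
    rw [hA]
    refine Submodule.mem_sup_left ?_
    rw [mem_restrictTotalDegree, X_pow_eq_monomial]
    exact (totalDegree_monomial_le _ _).trans (le_of_eq hμsum)
  have hXnI : (X i0 : MvPolynomial (Fin d) ℚ) ^ k ∉ I := by
    intro h
    have h1 : lcoeff ℚ μ ((X i0 : MvPolynomial (Fin d) ℚ) ^ k) = 0 :=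
      (Submodule.mem_inf.mp (hIQ h)).2
    rw [lcoeff_apply, X_pow_eq_monomial, coeff_monomial, if_pos rfl] at h1
    exact one_ne_zero h1
  refine ⟨lt_of_le_of_ne (hIQ.trans inf_le_left) fun h => hXnI (h ▸ hXA), ⟨i0, hXnI⟩⟩
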